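/- Let f: M → N be a smooth map between smooth manifolds, with M a complex manifold viewed with local holomorphic coordinates z^α and N a Kähler manifold with holomorphic coordinates w^i and Kähler metric g. If f is pluri-harmonic, i.e. ∂²f^i/∂z^α∂z̄^β + Γ^i_{jk}(f) (∂f^j/∂z̄^β)(∂f^k/∂z^α) = 0 for all α, β, i, then the (1,1)-form ω₀ = (√−1/2) g_{ij̄}(f) ∂f^i ∧ ∂̄f̄^j is d-closed: ∂ω₀ = 0 and ∂̄ω₀ = 0. -/

import Mathlib

open Complex Finset
open scoped ComplexOrder

/-- The Wirtinger derivative `∂g/∂z^α` of a (real-)differentiable function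
`g : ℂ^ι → ℂ` at `x`. -/
noncomputable def wirtZ {ι : Type*} [Fintype ι] [DecidableEq ι]
    (g : (ι → ℂ) → ℂ) (α : ι) (x : ι → ℂ) : ℂ :=
  (fderiv ℝ g x (Pi.single α 1) - Complex.I * fderiv ℝ g x (Pi.single α Complex.I)) / 2

/-- The conjugate Wirtinger derivative `∂g/∂z̄^α`. -/
noncomputable def wirtZbar {ι : Type*} [Fintype ι] [DecidableEq ι]
    (g : (ι → ℂ) → ℂ) (α : ι) (x : ι → ℂ) : ℂ :=
  (fderiv ℝ g x (Pi.single α 1) + Complex.I * fderiv ℝ g x (Pi.single α Complex.I)) / 2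

section helpers
variable {ι : Type*} [Fintype ι] [DecidableEq ι]

lemma contDiff_fderiv_apply {u : (ι → ℂ) → ℂ} (hu : ContDiff ℝ (⊤ : ℕ∞) u) (v : ι → ℂ) :
    ContDiff ℝ (⊤ : ℕ∞) (fun x => fderiv ℝ u x v) :=
  (hu.fderiv_right (m := (⊤ : ℕ∞)) (by simp)).clm_apply contDiff_const

lemma wirtZ_contDiff {u : (ι → ℂ) → ℂ} (hu : ContDiff ℝ (⊤ : ℕ∞) u) (α : ι) :
    ContDiff ℝ (⊤ : ℕ∞) (wirtZ u α) := by
  unfold wirtZ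
  exact ((contDiff_fderiv_apply hu _).sub
    (contDiff_const.mul (contDiff_fderiv_apply hu _))).div_const 2

lemma wirtZbar_contDiff {u : (ι → ℂ) → ℂ} (hu : ContDiff ℝ (⊤ : ℕ∞) u) (α : ι) :
    ContDiff ℝ (⊤ : ℕ∞) (wirtZbar u α) := by
  unfold wirtZbar
  exact ((contDiff_fderiv_apply hu _).add
    (contDiff_const.mul (contDiff_fderiv_apply hu _))).div_const 2

lemma wirtZ_sum {κ : Type*} {s : Finset κ} {F : κ → (ι → ℂ) → ℂ} {x : ι → ℂ}
    (h : ∀ k ∈ s, DifferentiableAt ℝ (F k) x) (α : ι) :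
    wirtZ (fun y => ∑ k ∈ s, F k y) α x = ∑ k ∈ s, wirtZ (F k) α x := by
  unfold wirtZ
  rw [fderiv_fun_sum h]
  simp only [ContinuousLinearMap.sum_apply]
  rw [Finset.mul_sum, ← Finset.sum_sub_distrib, Finset.sum_div]

lemma wirtZ_mul {u v : (ι → ℂ) → ℂ} {x : ι → ℂ}
    (hu : DifferentiableAt ℝ u x) (hv : DifferentiableAt ℝ v x) (α : ι) :
    wirtZ (fun y => u y * v y) α x = wirtZ u α x * v x + u x * wirtZ v α x := by
  unfold wirtZ
  rw [fderiv_fun_mul hu hv]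
  simp only [ContinuousLinearMap.add_apply, ContinuousLinearMap.smul_apply, smul_eq_mul]
  ring

lemma fderiv_conj_comp {u : (ι → ℂ) → ℂ} {x : ι → ℂ} (hu : DifferentiableAt ℝ u x) (v : ι → ℂ) :
    fderiv ℝ (fun y => (starRingEnd ℂ) (u y)) x v = (starRingEnd ℂ) (fderiv ℝ u x v) := by
  have h2 : HasFDerivAt (fun y => Complex.conjCLE (u y))
      ((Complex.conjCLE : ℂ →L[ℝ] ℂ).comp (fderiv ℝ u x)) x :=
    ((Complex.conjCLE : ℂ →L[ℝ] ℂ).hasFDerivAt).comp x hu.hasFDerivAt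
  simp only [Complex.conjCLE_apply] at h2
  rw [h2.fderiv]
  simp [Complex.conjCLE_apply]

lemma wirtZ_conj {u : (ι → ℂ) → ℂ} {x : ι → ℂ} (hu : DifferentiableAt ℝ u x) (α : ι) :
    wirtZ (fun y => (starRingEnd ℂ) (u y)) α x = (starRingEnd ℂ) (wirtZbar u α x) := by
  unfold wirtZ wirtZbar
  rw [fderiv_conj_comp hu, fderiv_conj_comp hu]
  rw [map_div₀, map_add, map_mul, Complex.conj_I]
  simp only [map_ofNat]
  ring

lemma wirtZbar_conj {u : (ι → ℂ) → ℂ} {x : ι → ℂ} (hu : DifferentiableAt ℝ u x) (α : ι) :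
    wirtZbar (fun y => (starRingEnd ℂ) (u y)) α x = (starRingEnd ℂ) (wirtZ u α x) := by
  unfold wirtZ wirtZbar
  rw [fderiv_conj_comp hu, fderiv_conj_comp hu]
  rw [map_div₀, map_sub, map_mul, Complex.conj_I]
  simp only [map_ofNat]
  ring

end helpers

section helpers2
variable {ι : Type*} [Fintype ι] [DecidableEq ι]

lemma clm_eval {κ : Type*} [Fintype κ] [DecidableEq κ] (L : (κ → ℂ) →L[ℝ] ℂ) (u : κ → ℂ) :
    L u = ∑ k, ((L (Pi.single k 1) - Complex.I * L (Pi.single k Complex.I)) / 2 * u k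
      + (L (Pi.single k 1) + Complex.I * L (Pi.single k Complex.I)) / 2
        * (starRingEnd ℂ) (u k)) := by
  conv_lhs => rw [← Finset.univ_sum_single u, map_sum]
  refine Finset.sum_congr rfl fun k _ => ?_
  have hsingle : Pi.single k (u k) =
      (u k).re • (Pi.single k 1 : κ → ℂ) + (u k).im • (Pi.single k Complex.I : κ → ℂ) := by
    funext j
    by_cases hj : j = k
    · subst hj
      simp [Complex.real_smul, Complex.re_add_im]
    · simp [Pi.single_apply, hj]
  rw [hsingle, map_add, map_smul, map_smul]
  have hz : (u k : ℂ) = (u k).re + (u k).im * Complex.I := (Complex.re_add_im (u k)).symm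
  have hcz : (starRingEnd ℂ) (u k) = (u k).re - (u k).im * Complex.I := by
    apply Complex.ext <;> simp
  simp only [smul_eq_mul, Complex.real_smul]
  linear_combination (-(L (Pi.single k 1) - Complex.I * L (Pi.single k Complex.I))/2) * hz
    + (-(L (Pi.single k 1) + Complex.I * L (Pi.single k Complex.I))/2) * hcz
    + ((u k).im : ℂ) * (L (Pi.single k Complex.I)) * Complex.I_sq

lemma wirtZ_comp {κ : Type*} [Fintype κ] [DecidableEq κ]
    {h : (κ → ℂ) → ℂ} {f : (ι → ℂ) → (κ → ℂ)} {x : ι → ℂ}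
    (hh : DifferentiableAt ℝ h (f x)) (hf : ∀ k, DifferentiableAt ℝ (fun y => f y k) x) (α : ι) :
    wirtZ (fun y => h (f y)) α x =
      ∑ k, (wirtZ h k (f x) * wirtZ (fun y => f y k) α x
        + wirtZbar h k (f x) * (starRingEnd ℂ) (wirtZbar (fun y => f y k) α x)) := by
  have hfd : DifferentiableAt ℝ f x := differentiableAt_pi.mpr hf
  have hc : ∀ v, fderiv ℝ (fun y => h (f y)) x v = fderiv ℝ h (f x) (fderiv ℝ f x v) := by
    intro v
    have hH : HasFDerivAt (fun y => h (f y))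
        ((fderiv ℝ h (f x)).comp (fderiv ℝ f x)) x :=
      hh.hasFDerivAt.comp x hfd.hasFDerivAt
    rw [hH.fderiv]; rfl
  have hcomp : ∀ (v : ι → ℂ) (k : κ),
      fderiv ℝ f x v k = fderiv ℝ (fun y => f y k) x v := by
    intro v k; rw [fderiv_pi hf]; rfl
  unfold wirtZ wirtZbar
  rw [hc, hc, clm_eval (fderiv ℝ h (f x)), clm_eval (fderiv ℝ h (f x))]
  rw [Finset.mul_sum, ← Finset.sum_sub_distrib, Finset.sum_div]
  refine Finset.sum_congr rfl fun k _ => ?_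
  rw [hcomp, hcomp]
  rw [map_div₀, map_add, map_mul, Complex.conj_I, map_ofNat]
  ring

lemma wirtZbar_comp {κ : Type*} [Fintype κ] [DecidableEq κ]
    {h : (κ → ℂ) → ℂ} {f : (ι → ℂ) → (κ → ℂ)} {x : ι → ℂ}
    (hh : DifferentiableAt ℝ h (f x)) (hf : ∀ k, DifferentiableAt ℝ (fun y => f y k) x) (α : ι) :
    wirtZbar (fun y => h (f y)) α x =
      ∑ k, (wirtZ h k (f x) * wirtZbar (fun y => f y k) α x
        + wirtZbar h k (f x) * (starRingEnd ℂ) (wirtZ (fun y => f y k) α x)) := by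
  have hfd : DifferentiableAt ℝ f x := differentiableAt_pi.mpr hf
  have hc : ∀ v, fderiv ℝ (fun y => h (f y)) x v = fderiv ℝ h (f x) (fderiv ℝ f x v) := by
    intro v
    have hH : HasFDerivAt (fun y => h (f y))
        ((fderiv ℝ h (f x)).comp (fderiv ℝ f x)) x :=
      hh.hasFDerivAt.comp x hfd.hasFDerivAt
    rw [hH.fderiv]; rfl
  have hcomp : ∀ (v : ι → ℂ) (k : κ),
      fderiv ℝ f x v k = fderiv ℝ (fun y => f y k) x v := by
    intro v k; rw [fderiv_pi hf]; rfl
  unfold wirtZ wirtZbar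
  rw [hc, hc, clm_eval (fderiv ℝ h (f x)), clm_eval (fderiv ℝ h (f x))]
  rw [Finset.mul_sum, ← Finset.sum_add_distrib, Finset.sum_div]
  refine Finset.sum_congr rfl fun k _ => ?_
  rw [hcomp, hcomp]
  rw [map_div₀, map_sub, map_mul, Complex.conj_I, map_ofNat]
  ring

lemma wirtZ_linc {F G : (ι → ℂ) → ℂ} {x : ι → ℂ}
    (hF : DifferentiableAt ℝ F x) (hG : DifferentiableAt ℝ G x) (γ : ι) :
    wirtZ (fun y => (F y - Complex.I * G y) / 2) γ x
      = (wirtZ F γ x - Complex.I * wirtZ G γ x) / 2 := by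
  have h1 : (fun y => (F y - Complex.I * G y) / 2)
      = fun y => (F y - Complex.I * G y) * (2:ℂ)⁻¹ := by
    funext y; rw [div_eq_mul_inv]
  unfold wirtZ
  rw [h1, fderiv_mul_const (c := fun y => F y - Complex.I * G y) (hF.sub (hG.const_mul Complex.I)),
    fderiv_fun_sub hF (hG.const_mul Complex.I), fderiv_const_mul hG Complex.I]
  simp only [ContinuousLinearMap.smul_apply, ContinuousLinearMap.sub_apply,
    ContinuousLinearMap.coe_smul', Pi.smul_apply, smul_eq_mul]
  ring

lemma wirtZ_comm {u : (ι → ℂ) → ℂ} (hu : ContDiff ℝ ((⊤:ℕ∞) : WithTop ℕ∞) u) (α γ : ι)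
    (x : ι → ℂ) :
    wirtZ (fun y => wirtZ u α y) γ x = wirtZ (fun y => wirtZ u γ y) α x := by
  have hdf : Differentiable ℝ (fderiv ℝ u) :=
    (hu.fderiv_right (m := ((⊤:ℕ∞) : WithTop ℕ∞)) (by norm_cast)).differentiable (by norm_cast)
  have hdiff : ∀ v : ι → ℂ, DifferentiableAt ℝ (fun y => fderiv ℝ u y v) x := by
    intro v
    exact (hdf x).clm_apply (differentiableAt_const v)
  have heval : ∀ (v w : ι → ℂ),
      fderiv ℝ (fun y => fderiv ℝ u y v) x w = fderiv ℝ (fderiv ℝ u) x w v := by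
    intro v w
    rw [fderiv_clm_apply (hdf x) (differentiableAt_const v)]
    simp
  have hsym : ∀ v w : ι → ℂ,
      fderiv ℝ (fderiv ℝ u) x v w = fderiv ℝ (fderiv ℝ u) x w v :=
    hu.contDiffAt.isSymmSndFDerivAt (by simp <;> norm_cast)
  have expand : ∀ (a b : ι), wirtZ (fun y => wirtZ u a y) b x
      = ((fderiv ℝ (fderiv ℝ u) x (Pi.single b 1) (Pi.single a 1)
          - Complex.I * fderiv ℝ (fderiv ℝ u) x (Pi.single b Complex.I) (Pi.single a 1))
        - Complex.I * (fderiv ℝ (fderiv ℝ u) x (Pi.single b 1) (Pi.single a Complex.I)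
          - Complex.I * fderiv ℝ (fderiv ℝ u) x (Pi.single b Complex.I)
              (Pi.single a Complex.I))) / 2 / 2 := by
    intro a b
    have h0 : (fun y => wirtZ u a y) = fun y =>
        ((fun y => fderiv ℝ u y (Pi.single a 1)) y
          - Complex.I * (fun y => fderiv ℝ u y (Pi.single a Complex.I)) y) / 2 := rfl
    rw [h0, wirtZ_linc (hdiff _) (hdiff _)]
    unfold wirtZ
    simp only [heval]
    ring
  rw [expand α γ, expand γ α]
  rw [hsym (Pi.single γ 1) (Pi.single α 1), hsym (Pi.single γ Complex.I) (Pi.single α 1),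
    hsym (Pi.single γ 1) (Pi.single α Complex.I),
    hsym (Pi.single γ Complex.I) (Pi.single α Complex.I)]
  ring

end helpers2

section main
variable {m n : ℕ}

lemma diffAt_conj {ι : Type*} [Fintype ι] {u : (ι → ℂ) → ℂ} {x : ι → ℂ}
    (hu : DifferentiableAt ℝ u x) :
    DifferentiableAt ℝ (fun y => (starRingEnd ℂ) (u y)) x := by
  have := ((Complex.conjCLE : ℂ →L[ℝ] ℂ).differentiableAt (x := u x)).comp x hu
  simpa [Function.comp_def, Complex.conjCLE_apply] using this

lemma herm_entry (g : (Fin n → ℂ) → Matrix (Fin n) (Fin n) ℂ)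
    (hpos : ∀ w, (g w).PosDef) (w : Fin n → ℂ) (i j : Fin n) :
    (starRingEnd ℂ) (g w i j) = g w j i := by
  have h := (hpos w).1
  conv_rhs => rw [← h]
  simp [Matrix.conjTranspose_apply]

lemma contraction (g : (Fin n → ℂ) → Matrix (Fin n) (Fin n) ℂ)
    (hpos : ∀ w, (g w).PosDef)
    (Γ : Fin n → Fin n → Fin n → (Fin n → ℂ) → ℂ)
    (hΓ : ∀ i j k w, Γ i j k w = ∑ l, (g w)⁻¹ l i * wirtZ (fun v => g v j l) k w)
    (w : Fin n → ℂ) (i l k : Fin n) :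
    ∑ j, g w j i * Γ j l k w = wirtZ (fun v => g v l i) k w := by
  have hdet : IsUnit (g w).det := ((hpos w).det_pos).ne'.isUnit
  have hinv : (g w)⁻¹ * (g w) = 1 := Matrix.nonsing_inv_mul _ hdet
  calc ∑ j, g w j i * Γ j l k w
      = ∑ j, ∑ s, g w j i * ((g w)⁻¹ s j * wirtZ (fun v => g v l s) k w) := by
        refine Finset.sum_congr rfl fun j _ => ?_
        rw [hΓ, Finset.mul_sum]
    _ = ∑ s, ∑ j, g w j i * ((g w)⁻¹ s j * wirtZ (fun v => g v l s) k w) :=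
        Finset.sum_comm
    _ = ∑ s, (∑ j, (g w)⁻¹ s j * g w j i) * wirtZ (fun v => g v l s) k w := by
        refine Finset.sum_congr rfl fun s _ => ?_
        rw [Finset.sum_mul]
        refine Finset.sum_congr rfl fun j _ => ?_
        ring
    _ = ∑ s, ((g w)⁻¹ * (g w)) s i * wirtZ (fun v => g v l s) k w := by
        refine Finset.sum_congr rfl fun s _ => ?_
        rw [Matrix.mul_apply]
    _ = ∑ s, (1 : Matrix (Fin n) (Fin n) ℂ) s i * wirtZ (fun v => g v l s) k w := by
        rw [hinv]
    _ = wirtZ (fun v => g v l i) k w := by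
        simp [Matrix.one_apply]

end main

section big
variable {m n : ℕ}

theorem aux_key
    (f : (Fin m → ℂ) → (Fin n → ℂ))
    (g : (Fin n → ℂ) → Matrix (Fin n) (Fin n) ℂ)
    (hf : ∀ i, ContDiff ℝ (⊤ : ℕ∞) (fun x => f x i))
    (hg : ∀ i j, ContDiff ℝ (⊤ : ℕ∞) (fun w => g w i j))
    (hpos : ∀ w, (g w).PosDef)
    (Γ : Fin n → Fin n → Fin n → (Fin n → ℂ) → ℂ)
    (hΓ : ∀ i j k w, Γ i j k w = ∑ l, (g w)⁻¹ l i * wirtZ (fun v => g v j l) k w)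
    (hpluri : ∀ (x : Fin m → ℂ) (α β : Fin m) (i : Fin n),
      wirtZbar (fun y => wirtZ (fun z => f z i) α y) β x
        + ∑ j, ∑ k, Γ i j k (f x) * wirtZbar (fun z => f z j) β x
            * wirtZ (fun z => f z k) α x = 0)
    (hKahler : ∀ (w : Fin n → ℂ) (i j k : Fin n),
      wirtZ (fun v => g v i j) k w = wirtZ (fun v => g v k j) i w)
    (x : Fin m → ℂ) (α β γ : Fin m) :
    wirtZ (fun y => ∑ i, ∑ j, g (f y) i j * wirtZ (fun z => f z i) α y *
        (starRingEnd ℂ) (wirtZ (fun z => f z j) β y)) γ x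
      = (∑ i, ∑ j, (∑ k, wirtZ (fun v => g v i j) k (f x) * wirtZ (fun z => f z k) γ x)
            * wirtZ (fun z => f z i) α x * (starRingEnd ℂ) (wirtZ (fun z => f z j) β x))
        + (∑ i, ∑ j, g (f x) i j * wirtZ (fun y => wirtZ (fun z => f z i) α y) γ x
            * (starRingEnd ℂ) (wirtZ (fun z => f z j) β x)) := by
  have dP : ∀ (k : Fin n) (y : Fin m → ℂ), DifferentiableAt ℝ (fun z => f z k) y :=
    fun k y => ((hf k).differentiable (by simp)).differentiableAt
  have dA : ∀ (i : Fin n) (a : Fin m) (y : Fin m → ℂ),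
      DifferentiableAt ℝ (fun y' => wirtZ (fun z => f z i) a y') y :=
    fun i a y => (((wirtZ_contDiff (hf i) a)).differentiable (by simp)).differentiableAt
  have dG : ∀ (i j : Fin n) (y : Fin m → ℂ),
      DifferentiableAt ℝ (fun y' => g (f y') i j) y :=
    fun i j y => (((hg i j).comp (contDiff_pi.mpr hf)).differentiable (by simp)).differentiableAt
  have dcA : ∀ (j : Fin n) (b : Fin m) (y : Fin m → ℂ),
      DifferentiableAt ℝ (fun y' => (starRingEnd ℂ) (wirtZ (fun z => f z j) b y')) y :=
    fun j b y => diffAt_conj (dA j b y)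
  have dT : ∀ (i j : Fin n) (y : Fin m → ℂ),
      DifferentiableAt ℝ (fun y' => g (f y') i j * wirtZ (fun z => f z i) α y' *
        (starRingEnd ℂ) (wirtZ (fun z => f z j) β y')) y :=
    fun i j y => ((dG i j y).mul (dA i α y)).mul (dcA j β y)
  -- step 1 : push wirtZ through the double sum
  have e1 : wirtZ (fun y => ∑ i, ∑ j, g (f y) i j * wirtZ (fun z => f z i) α y *
        (starRingEnd ℂ) (wirtZ (fun z => f z j) β y)) γ x
      = ∑ i, ∑ j, wirtZ (fun y => g (f y) i j * wirtZ (fun z => f z i) α y *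
        (starRingEnd ℂ) (wirtZ (fun z => f z j) β y)) γ x := by
    rw [wirtZ_sum (fun i _ => DifferentiableAt.fun_sum (fun j _ => dT i j x)) γ]
    exact Finset.sum_congr rfl fun i _ => wirtZ_sum (fun j _ => dT i j x) γ
  -- step 2 : Leibniz
  have e2 : ∀ i j : Fin n, wirtZ (fun y => g (f y) i j * wirtZ (fun z => f z i) α y *
        (starRingEnd ℂ) (wirtZ (fun z => f z j) β y)) γ x
      = (wirtZ (fun y => g (f y) i j) γ x * wirtZ (fun z => f z i) α x
          + g (f x) i j * wirtZ (fun y => wirtZ (fun z => f z i) α y) γ x)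
            * (starRingEnd ℂ) (wirtZ (fun z => f z j) β x)
        + g (f x) i j * wirtZ (fun z => f z i) α x
            * wirtZ (fun y => (starRingEnd ℂ) (wirtZ (fun z => f z j) β y)) γ x := by
    intro i j
    rw [wirtZ_mul ((dG i j x).fun_mul (dA i α x)) (dcA j β x), wirtZ_mul (dG i j x) (dA i α x)]
  -- step 3 : chain rule for g ∘ f
  have e3 : ∀ i j : Fin n, wirtZ (fun y => g (f y) i j) γ x
      = ∑ k, (wirtZ (fun v => g v i j) k (f x) * wirtZ (fun z => f z k) γ x
          + wirtZbar (fun v => g v i j) k (f x)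
            * (starRingEnd ℂ) (wirtZbar (fun z => f z k) γ x)) :=
    fun i j => wirtZ_comp (h := fun w => g w i j) (f := f)
      (((hg i j).differentiable (by simp)).differentiableAt) (fun k => dP k x) γ
  -- step 4 : Hermitian symmetry of g
  have e4 : ∀ (w : Fin n → ℂ) (i j k : Fin n),
      wirtZbar (fun v => g v i j) k w
        = (starRingEnd ℂ) (wirtZ (fun v => g v j i) k w) := by
    intro w i j k
    have hfun : (fun v => g v i j) = fun v => (starRingEnd ℂ) (g v j i) := by
      funext v; rw [herm_entry g hpos v j i]
    rw [hfun, wirtZbar_conj (((hg j i).differentiable (by simp)).differentiableAt) k]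
  -- step 5 : pluri-harmonicity
  have e5 : ∀ j : Fin n, wirtZ (fun y => (starRingEnd ℂ) (wirtZ (fun z => f z j) β y)) γ x
      = (starRingEnd ℂ) (-(∑ l, ∑ k, Γ j l k (f x) * wirtZbar (fun z => f z l) γ x
          * wirtZ (fun z => f z k) β x)) := by
    intro j
    rw [wirtZ_conj (dA j β x) γ]
    congr 1
    exact eq_neg_of_add_eq_zero_left (hpluri x β γ j)
  -- step 6 : per (i,j) normal form
  have e6 : ∀ i j : Fin n, wirtZ (fun y => g (f y) i j * wirtZ (fun z => f z i) α y *
        (starRingEnd ℂ) (wirtZ (fun z => f z j) β y)) γ x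
      = ((∑ k, wirtZ (fun v => g v i j) k (f x) * wirtZ (fun z => f z k) γ x)
            * wirtZ (fun z => f z i) α x * (starRingEnd ℂ) (wirtZ (fun z => f z j) β x)
        + g (f x) i j * wirtZ (fun y => wirtZ (fun z => f z i) α y) γ x
            * (starRingEnd ℂ) (wirtZ (fun z => f z j) β x))
        + ((∑ k, (starRingEnd ℂ) (wirtZ (fun v => g v j i) k (f x))
              * (starRingEnd ℂ) (wirtZbar (fun z => f z k) γ x))
            * wirtZ (fun z => f z i) α x * (starRingEnd ℂ) (wirtZ (fun z => f z j) β x)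
          + g (f x) i j * wirtZ (fun z => f z i) α x
            * (starRingEnd ℂ) (-(∑ l, ∑ k, Γ j l k (f x)
                * wirtZbar (fun z => f z l) γ x * wirtZ (fun z => f z k) β x))) := by
    intro i j
    rw [e2 i j, e3 i j, e5 j]
    simp only [e4 (f x) i j]
    rw [Finset.sum_add_distrib]
    ring
  -- cancellation of the two extra terms
  have hcontr : ∀ i l k : Fin n,
      ∑ j, g (f x) i j * (starRingEnd ℂ) (Γ j l k (f x))
        = (starRingEnd ℂ) (wirtZ (fun v => g v l i) k (f x)) := by
    intro i l k
    rw [← contraction g hpos Γ hΓ (f x) i l k, map_sum]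
    refine Finset.sum_congr rfl fun j _ => ?_
    rw [map_mul, herm_entry g hpos (f x) j i]
  have h3 : (∑ i, ∑ j, ((∑ k, (starRingEnd ℂ) (wirtZ (fun v => g v j i) k (f x))
            * (starRingEnd ℂ) (wirtZbar (fun z => f z k) γ x))
          * wirtZ (fun z => f z i) α x * (starRingEnd ℂ) (wirtZ (fun z => f z j) β x)))
      = ∑ i, ∑ k, ∑ j, (starRingEnd ℂ) (wirtZ (fun v => g v k i) j (f x))
          * (starRingEnd ℂ) (wirtZbar (fun z => f z k) γ x)
          * wirtZ (fun z => f z i) α x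
          * (starRingEnd ℂ) (wirtZ (fun z => f z j) β x) := by
    refine Finset.sum_congr rfl fun i _ => ?_
    calc ∑ j, ((∑ k, (starRingEnd ℂ) (wirtZ (fun v => g v j i) k (f x))
            * (starRingEnd ℂ) (wirtZbar (fun z => f z k) γ x))
          * wirtZ (fun z => f z i) α x * (starRingEnd ℂ) (wirtZ (fun z => f z j) β x))
        = ∑ j, ∑ k, (starRingEnd ℂ) (wirtZ (fun v => g v j i) k (f x))
            * (starRingEnd ℂ) (wirtZbar (fun z => f z k) γ x)
            * wirtZ (fun z => f z i) α x
            * (starRingEnd ℂ) (wirtZ (fun z => f z j) β x) := by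
          refine Finset.sum_congr rfl fun j _ => ?_
          rw [Finset.sum_mul, Finset.sum_mul]
      _ = ∑ k, ∑ j, (starRingEnd ℂ) (wirtZ (fun v => g v j i) k (f x))
            * (starRingEnd ℂ) (wirtZbar (fun z => f z k) γ x)
            * wirtZ (fun z => f z i) α x
            * (starRingEnd ℂ) (wirtZ (fun z => f z j) β x) := Finset.sum_comm
      _ = ∑ k, ∑ j, (starRingEnd ℂ) (wirtZ (fun v => g v k i) j (f x))
            * (starRingEnd ℂ) (wirtZbar (fun z => f z k) γ x)
            * wirtZ (fun z => f z i) α x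
            * (starRingEnd ℂ) (wirtZ (fun z => f z j) β x) := by
          refine Finset.sum_congr rfl fun k _ => Finset.sum_congr rfl fun j _ => ?_
          rw [hKahler (f x) j i k]
  have h4 : (∑ i, ∑ j, (g (f x) i j * wirtZ (fun z => f z i) α x
          * (starRingEnd ℂ) (-(∑ l, ∑ k, Γ j l k (f x)
              * wirtZbar (fun z => f z l) γ x * wirtZ (fun z => f z k) β x))))
      = -(∑ i, ∑ k, ∑ j, (starRingEnd ℂ) (wirtZ (fun v => g v k i) j (f x))
          * (starRingEnd ℂ) (wirtZbar (fun z => f z k) γ x)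
          * wirtZ (fun z => f z i) α x
          * (starRingEnd ℂ) (wirtZ (fun z => f z j) β x)) := by
    have step1 : ∀ i j : Fin n, g (f x) i j * wirtZ (fun z => f z i) α x
          * (starRingEnd ℂ) (-(∑ l, ∑ k, Γ j l k (f x)
              * wirtZbar (fun z => f z l) γ x * wirtZ (fun z => f z k) β x))
        = -(∑ l, ∑ k, g (f x) i j * (starRingEnd ℂ) (Γ j l k (f x))
            * (starRingEnd ℂ) (wirtZbar (fun z => f z l) γ x)
            * wirtZ (fun z => f z i) α x
            * (starRingEnd ℂ) (wirtZ (fun z => f z k) β x)) := by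
      intro i j
      rw [map_neg, map_sum]
      rw [mul_neg, neg_inj, Finset.mul_sum]
      refine Finset.sum_congr rfl fun l _ => ?_
      rw [map_sum, Finset.mul_sum]
      refine Finset.sum_congr rfl fun k _ => ?_
      rw [map_mul, map_mul]
      ring
    calc (∑ i, ∑ j, (g (f x) i j * wirtZ (fun z => f z i) α x
          * (starRingEnd ℂ) (-(∑ l, ∑ k, Γ j l k (f x)
              * wirtZbar (fun z => f z l) γ x * wirtZ (fun z => f z k) β x))))
        = ∑ i, -∑ j, ∑ l, ∑ k, g (f x) i j * (starRingEnd ℂ) (Γ j l k (f x))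
            * (starRingEnd ℂ) (wirtZbar (fun z => f z l) γ x)
            * wirtZ (fun z => f z i) α x
            * (starRingEnd ℂ) (wirtZ (fun z => f z k) β x) := by
          refine Finset.sum_congr rfl fun i _ => ?_
          rw [← Finset.sum_neg_distrib]
          exact Finset.sum_congr rfl fun j _ => step1 i j
      _ = -∑ i, ∑ j, ∑ l, ∑ k, g (f x) i j * (starRingEnd ℂ) (Γ j l k (f x))
            * (starRingEnd ℂ) (wirtZbar (fun z => f z l) γ x)
            * wirtZ (fun z => f z i) α x
            * (starRingEnd ℂ) (wirtZ (fun z => f z k) β x) := by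
          rw [← Finset.sum_neg_distrib]
      _ = -∑ i, ∑ l, ∑ k, ∑ j, g (f x) i j * (starRingEnd ℂ) (Γ j l k (f x))
            * (starRingEnd ℂ) (wirtZbar (fun z => f z l) γ x)
            * wirtZ (fun z => f z i) α x
            * (starRingEnd ℂ) (wirtZ (fun z => f z k) β x) := by
          rw [neg_inj]
          refine Finset.sum_congr rfl fun i _ => ?_
          rw [Finset.sum_comm]
          exact Finset.sum_congr rfl fun l _ => Finset.sum_comm
      _ = -∑ i, ∑ l, ∑ k, (∑ j, g (f x) i j * (starRingEnd ℂ) (Γ j l k (f x)))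
            * ((starRingEnd ℂ) (wirtZbar (fun z => f z l) γ x)
            * wirtZ (fun z => f z i) α x
            * (starRingEnd ℂ) (wirtZ (fun z => f z k) β x)) := by
          rw [neg_inj]
          refine Finset.sum_congr rfl fun i _ => Finset.sum_congr rfl fun l _ =>
            Finset.sum_congr rfl fun k _ => ?_
          rw [Finset.sum_mul]
          refine Finset.sum_congr rfl fun j _ => ?_
          ring
      _ = -(∑ i, ∑ k, ∑ j, (starRingEnd ℂ) (wirtZ (fun v => g v k i) j (f x))
          * (starRingEnd ℂ) (wirtZbar (fun z => f z k) γ x)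
          * wirtZ (fun z => f z i) α x
          * (starRingEnd ℂ) (wirtZ (fun z => f z j) β x)) := by
          rw [neg_inj]
          refine Finset.sum_congr rfl fun i _ => Finset.sum_congr rfl fun l _ =>
            Finset.sum_congr rfl fun k _ => ?_
          rw [hcontr i l k]
          ring
  -- assemble
  rw [e1]
  calc (∑ i, ∑ j, wirtZ (fun y => g (f y) i j * wirtZ (fun z => f z i) α y *
        (starRingEnd ℂ) (wirtZ (fun z => f z j) β y)) γ x)
      = ∑ i, ∑ j,
        (((∑ k, wirtZ (fun v => g v i j) k (f x) * wirtZ (fun z => f z k) γ x)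
            * wirtZ (fun z => f z i) α x * (starRingEnd ℂ) (wirtZ (fun z => f z j) β x)
        + g (f x) i j * wirtZ (fun y => wirtZ (fun z => f z i) α y) γ x
            * (starRingEnd ℂ) (wirtZ (fun z => f z j) β x))
        + ((∑ k, (starRingEnd ℂ) (wirtZ (fun v => g v j i) k (f x))
              * (starRingEnd ℂ) (wirtZbar (fun z => f z k) γ x))
            * wirtZ (fun z => f z i) α x * (starRingEnd ℂ) (wirtZ (fun z => f z j) β x)
          + g (f x) i j * wirtZ (fun z => f z i) α x
            * (starRingEnd ℂ) (-(∑ l, ∑ k, Γ j l k (f x)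
                * wirtZbar (fun z => f z l) γ x * wirtZ (fun z => f z k) β x)))) := by
        exact Finset.sum_congr rfl fun i _ => Finset.sum_congr rfl fun j _ => e6 i j
    _ = ((∑ i, ∑ j, (∑ k, wirtZ (fun v => g v i j) k (f x) * wirtZ (fun z => f z k) γ x)
            * wirtZ (fun z => f z i) α x * (starRingEnd ℂ) (wirtZ (fun z => f z j) β x))
        + (∑ i, ∑ j, g (f x) i j * wirtZ (fun y => wirtZ (fun z => f z i) α y) γ x
            * (starRingEnd ℂ) (wirtZ (fun z => f z j) β x)))
        + ((∑ i, ∑ j, (∑ k, (starRingEnd ℂ) (wirtZ (fun v => g v j i) k (f x))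
              * (starRingEnd ℂ) (wirtZbar (fun z => f z k) γ x))
            * wirtZ (fun z => f z i) α x * (starRingEnd ℂ) (wirtZ (fun z => f z j) β x))
          + (∑ i, ∑ j, g (f x) i j * wirtZ (fun z => f z i) α x
            * (starRingEnd ℂ) (-(∑ l, ∑ k, Γ j l k (f x)
                * wirtZbar (fun z => f z l) γ x * wirtZ (fun z => f z k) β x)))) := by
        simp only [Finset.sum_add_distrib]
    _ = (∑ i, ∑ j, (∑ k, wirtZ (fun v => g v i j) k (f x) * wirtZ (fun z => f z k) γ x)
            * wirtZ (fun z => f z i) α x * (starRingEnd ℂ) (wirtZ (fun z => f z j) β x))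
        + (∑ i, ∑ j, g (f x) i j * wirtZ (fun y => wirtZ (fun z => f z i) α y) γ x
            * (starRingEnd ℂ) (wirtZ (fun z => f z j) β x)) := by
        rw [h3, h4, add_neg_cancel, add_zero]


theorem aux_sym
    (f : (Fin m → ℂ) → (Fin n → ℂ))
    (g : (Fin n → ℂ) → Matrix (Fin n) (Fin n) ℂ)
    (hf : ∀ i, ContDiff ℝ (⊤ : ℕ∞) (fun x => f x i))
    (hg : ∀ i j, ContDiff ℝ (⊤ : ℕ∞) (fun w => g w i j))
    (hpos : ∀ w, (g w).PosDef)
    (Γ : Fin n → Fin n → Fin n → (Fin n → ℂ) → ℂ)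
    (hΓ : ∀ i j k w, Γ i j k w = ∑ l, (g w)⁻¹ l i * wirtZ (fun v => g v j l) k w)
    (hpluri : ∀ (x : Fin m → ℂ) (α β : Fin m) (i : Fin n),
      wirtZbar (fun y => wirtZ (fun z => f z i) α y) β x
        + ∑ j, ∑ k, Γ i j k (f x) * wirtZbar (fun z => f z j) β x
            * wirtZ (fun z => f z k) α x = 0)
    (hKahler : ∀ (w : Fin n → ℂ) (i j k : Fin n),
      wirtZ (fun v => g v i j) k w = wirtZ (fun v => g v k j) i w)
    (x : Fin m → ℂ) (α β γ : Fin m) :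
    wirtZ (fun y => ∑ i, ∑ j, g (f y) i j * wirtZ (fun z => f z i) α y *
        (starRingEnd ℂ) (wirtZ (fun z => f z j) β y)) γ x
      = wirtZ (fun y => ∑ i, ∑ j, g (f y) i j * wirtZ (fun z => f z i) γ y *
        (starRingEnd ℂ) (wirtZ (fun z => f z j) β y)) α x := by
  rw [aux_key f g hf hg hpos Γ hΓ hpluri hKahler x α β γ,
      aux_key f g hf hg hpos Γ hΓ hpluri hKahler x γ β α]
  have hT2 : (∑ i, ∑ j, g (f x) i j * wirtZ (fun y => wirtZ (fun z => f z i) α y) γ x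
        * (starRingEnd ℂ) (wirtZ (fun z => f z j) β x))
      = (∑ i, ∑ j, g (f x) i j * wirtZ (fun y => wirtZ (fun z => f z i) γ y) α x
        * (starRingEnd ℂ) (wirtZ (fun z => f z j) β x)) := by
    refine Finset.sum_congr rfl fun i _ => Finset.sum_congr rfl fun j _ => ?_
    rw [wirtZ_comm ((hf i).of_le (by simp)) α γ x]
  have hT1 : (∑ i, ∑ j, (∑ k, wirtZ (fun v => g v i j) k (f x) * wirtZ (fun z => f z k) γ x)
            * wirtZ (fun z => f z i) α x * (starRingEnd ℂ) (wirtZ (fun z => f z j) β x))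
      = (∑ i, ∑ j, (∑ k, wirtZ (fun v => g v i j) k (f x) * wirtZ (fun z => f z k) α x)
            * wirtZ (fun z => f z i) γ x * (starRingEnd ℂ) (wirtZ (fun z => f z j) β x)) := by
    have expand : ∀ (a c : Fin m),
        (∑ i, ∑ j, (∑ k, wirtZ (fun v => g v i j) k (f x) * wirtZ (fun z => f z k) c x)
            * wirtZ (fun z => f z i) a x * (starRingEnd ℂ) (wirtZ (fun z => f z j) β x))
        = ∑ j, ∑ i, ∑ k, wirtZ (fun v => g v i j) k (f x) * wirtZ (fun z => f z k) c x
            * wirtZ (fun z => f z i) a x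
            * (starRingEnd ℂ) (wirtZ (fun z => f z j) β x) := by
      intro a c
      rw [Finset.sum_comm]
      refine Finset.sum_congr rfl fun j _ => Finset.sum_congr rfl fun i _ => ?_
      rw [Finset.sum_mul, Finset.sum_mul]
    rw [expand α γ, expand γ α]
    refine Finset.sum_congr rfl fun j _ => ?_
    rw [Finset.sum_comm]
    refine Finset.sum_congr rfl fun i _ => Finset.sum_congr rfl fun k _ => ?_
    rw [hKahler (f x) k j i]
    ring
  rw [hT1, hT2]
end big


/-- If `f : ℂ^m → ℂ^n` is a smooth pluri-harmonic map into a Kähler manifold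
`(ℂ^n, g)` (in holomorphic coordinates, with Christoffel symbols `Γ`), then the `(1,1)`-form
`ω₀ = (√-1/2) g_{ij̄}(f) ∂f^i ∧ ∂̄f̄^j` is `d`-closed: `∂ω₀ = 0` and `∂̄ω₀ = 0`, expressed
through the symmetry of the Wirtinger derivatives of its coefficients
`(ω₀)_{αβ̄} = ∑_{i,j} g_{ij̄}(f) (∂f^i/∂z^α) conj(∂f^j/∂z^β)`. -/
theorem stmt_6 {m n : ℕ}
    (f : (Fin m → ℂ) → (Fin n → ℂ))
    (g : (Fin n → ℂ) → Matrix (Fin n) (Fin n) ℂ)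
    (hf : ∀ i, ContDiff ℝ (⊤ : ℕ∞) (fun x => f x i))
    (hg : ∀ i j, ContDiff ℝ (⊤ : ℕ∞) (fun w => g w i j))
    (hpos : ∀ w, (g w).PosDef)
    (hKahler : ∀ (w : Fin n → ℂ) (i j k : Fin n),
      wirtZ (fun v => g v i j) k w = wirtZ (fun v => g v k j) i w)
    (Γ : Fin n → Fin n → Fin n → (Fin n → ℂ) → ℂ)
    (hΓ : ∀ i j k w, Γ i j k w = ∑ l, (g w)⁻¹ l i * wirtZ (fun v => g v j l) k w)
    (hpluri : ∀ (x : Fin m → ℂ) (α β : Fin m) (i : Fin n),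
      wirtZbar (fun y => wirtZ (fun z => f z i) α y) β x
        + ∑ j, ∑ k, Γ i j k (f x) * wirtZbar (fun z => f z j) β x
            * wirtZ (fun z => f z k) α x = 0) :
    ∀ (x : Fin m → ℂ) (α β γ : Fin m),
      (wirtZ (fun y => ∑ i, ∑ j, g (f y) i j * wirtZ (fun z => f z i) α y *
          (starRingEnd ℂ) (wirtZ (fun z => f z j) β y)) γ x
        = wirtZ (fun y => ∑ i, ∑ j, g (f y) i j * wirtZ (fun z => f z i) γ y *
          (starRingEnd ℂ) (wirtZ (fun z => f z j) β y)) α x)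
      ∧ (wirtZbar (fun y => ∑ i, ∑ j, g (f y) i j * wirtZ (fun z => f z i) α y *
          (starRingEnd ℂ) (wirtZ (fun z => f z j) β y)) γ x
        = wirtZbar (fun y => ∑ i, ∑ j, g (f y) i j * wirtZ (fun z => f z i) α y *
          (starRingEnd ℂ) (wirtZ (fun z => f z j) γ y)) β x) := by
  intro x α β γ
  have part1 := aux_sym f g hf hg hpos Γ hΓ hpluri hKahler
  refine ⟨part1 x α β γ, ?_⟩
  -- conjugation symmetry of the coefficient
  have dA : ∀ (i : Fin n) (a : Fin m) (y : Fin m → ℂ),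
      DifferentiableAt ℝ (fun y' => wirtZ (fun z => f z i) a y') y :=
    fun i a y => (((wirtZ_contDiff (hf i) a)).differentiable (by simp)).differentiableAt
  have dG : ∀ (i j : Fin n) (y : Fin m → ℂ),
      DifferentiableAt ℝ (fun y' => g (f y') i j) y :=
    fun i j y => (((hg i j).comp (contDiff_pi.mpr hf)).differentiable (by simp)).differentiableAt
  have dω : ∀ (a b : Fin m) (y : Fin m → ℂ),
      DifferentiableAt ℝ (fun y' => ∑ i, ∑ j, g (f y') i j * wirtZ (fun z => f z i) a y' *
        (starRingEnd ℂ) (wirtZ (fun z => f z j) b y')) y := by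
    intro a b y
    refine DifferentiableAt.fun_sum fun i _ => DifferentiableAt.fun_sum fun j _ => ?_
    exact ((dG i j y).mul (dA i a y)).mul (diffAt_conj (dA j b y))
  have hconj : ∀ (a b : Fin m) (y : Fin m → ℂ),
      (starRingEnd ℂ) (∑ i, ∑ j, g (f y) i j * wirtZ (fun z => f z i) a y *
          (starRingEnd ℂ) (wirtZ (fun z => f z j) b y))
        = ∑ i, ∑ j, g (f y) i j * wirtZ (fun z => f z i) b y *
          (starRingEnd ℂ) (wirtZ (fun z => f z j) a y) := by
    intro a b y
    rw [map_sum]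
    calc (∑ i, (starRingEnd ℂ) (∑ j, g (f y) i j * wirtZ (fun z => f z i) a y *
          (starRingEnd ℂ) (wirtZ (fun z => f z j) b y)))
        = ∑ i, ∑ j, g (f y) j i * wirtZ (fun z => f z j) b y *
          (starRingEnd ℂ) (wirtZ (fun z => f z i) a y) := by
          refine Finset.sum_congr rfl fun i _ => ?_
          rw [map_sum]
          refine Finset.sum_congr rfl fun j _ => ?_
          rw [map_mul, map_mul, Complex.conj_conj, herm_entry g hpos (f y) i j]
          ring
      _ = ∑ i, ∑ j, g (f y) i j * wirtZ (fun z => f z i) b y *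
          (starRingEnd ℂ) (wirtZ (fun z => f z j) a y) := Finset.sum_comm
  have hfe : ∀ (a b : Fin m),
      (fun y => ∑ i, ∑ j, g (f y) i j * wirtZ (fun z => f z i) a y *
          (starRingEnd ℂ) (wirtZ (fun z => f z j) b y))
        = (fun y => (starRingEnd ℂ) (∑ i, ∑ j, g (f y) i j * wirtZ (fun z => f z i) b y *
          (starRingEnd ℂ) (wirtZ (fun z => f z j) a y))) := by
    intro a b
    funext y
    rw [hconj b a y]
  calc wirtZbar (fun y => ∑ i, ∑ j, g (f y) i j * wirtZ (fun z => f z i) α y *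
          (starRingEnd ℂ) (wirtZ (fun z => f z j) β y)) γ x
      = (starRingEnd ℂ) (wirtZ (fun y => ∑ i, ∑ j, g (f y) i j *
          wirtZ (fun z => f z i) β y *
          (starRingEnd ℂ) (wirtZ (fun z => f z j) α y)) γ x) := by
        rw [hfe α β, wirtZbar_conj (dω β α x) γ]
    _ = (starRingEnd ℂ) (wirtZ (fun y => ∑ i, ∑ j, g (f y) i j *
          wirtZ (fun z => f z i) γ y *
          (starRingEnd ℂ) (wirtZ (fun z => f z j) α y)) β x) := by
        rw [part1 x β α γ]
    _ = wirtZbar (fun y => ∑ i, ∑ j, g (f y) i j * wirtZ (fun z => f z i) α y *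
          (starRingEnd ℂ) (wirtZ (fun z => f z j) γ y)) β x := by
        rw [hfe α γ, wirtZbar_conj (dω γ α x) β]
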